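/- arXiv:2102.06255 — 4 statements merged into one kernel-verified Lean document; each statement's English description precedes it below -/
import Mathlib

section
/- Let n ≥ 1 and let u, v ∈ ℂ^{n+1} satisfy ‖u‖ = 1, ∑_k u_k·conj(v_k) = 0, and v ≠ 0. Set r = ‖v‖ and define ũ_k = (1/√2)(r·u_k + i·v_k) and ṽ_k = (1/√2)(conj(v_k) − i·r·conj(u_k)). Then ∑_k |ũ_k|² = ∑_k |ṽ_k|² = r² ≠ 0 and ∑_k ũ_k·ṽ_k = 0. -/
/-!
With `r = ‖v‖`, the vectors `r u + i v` and `v + i r u` are sums of two orthogonal vectors of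
norm `r`, so both have squared norm `2 r²` by Pythagoras, and their Hermitian product is
`i (‖v‖² - r² ‖u‖²) = 0`. Since `ṽ` is the complex conjugate of `(v + i r u) / √2`, the bilinear
sum `∑ ũ_k ṽ_k` is exactly that Hermitian product, halved.
-/

open Complex Finset
open scoped InnerProductSpace ComplexConjugate

section
variable {E : Type*} [NormedAddCommGroup E] [InnerProductSpace ℂ E] {u v : E}

theorem norm_ofReal_smul_add_I_smul_sq (r : ℝ) (huv : ⟪u, v⟫_ℂ = 0) :
    ‖(r : ℂ) • u + I • v‖ ^ 2 = r ^ 2 * ‖u‖ ^ 2 + ‖v‖ ^ 2 := by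
  rw [@norm_add_sq ℂ, inner_smul_left, inner_smul_right, huv]
  simp [norm_smul, mul_pow]

theorem norm_add_I_mul_ofReal_smul_sq (r : ℝ) (huv : ⟪u, v⟫_ℂ = 0) :
    ‖v + (I * r) • u‖ ^ 2 = ‖v‖ ^ 2 + r ^ 2 * ‖u‖ ^ 2 := by
  rw [@norm_add_sq ℂ, inner_smul_right, inner_eq_zero_symm.mp huv]
  simp [norm_smul, mul_pow]

theorem inner_add_I_mul_ofReal_smul_ofReal_smul_add_I_smul (r : ℝ) (huv : ⟪u, v⟫_ℂ = 0) :
    ⟪v + (I * r) • u, (r : ℂ) • u + I • v⟫_ℂ = I * ((‖v‖ ^ 2 - r ^ 2 * ‖u‖ ^ 2 : ℝ) : ℂ) := by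
  simp only [inner_add_left, inner_add_right, inner_smul_left, inner_smul_right, huv,
    inner_eq_zero_symm.mp huv, inner_self_eq_norm_sq_to_K, RCLike.ofReal_eq_complex_ofReal,
    map_mul, conj_I, conj_ofReal]
  push_cast
  ring

theorem norm_inv_sqrt_two_smul_sq (x : E) : ‖((√2 : ℝ) : ℂ)⁻¹ • x‖ ^ 2 = ‖x‖ ^ 2 / 2 := by
  rw [norm_smul, mul_pow, norm_inv, norm_real, Real.norm_of_nonneg (by positivity), inv_pow,
    Real.sq_sqrt zero_le_two, inv_mul_eq_div]
end

theorem stmt_0_general (n : ℕ) (u v : Fin (n + 1) → ℂ)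
    (hu : ∑ k, ‖u k‖ ^ 2 = 1)
    (huv : ∑ k, u k * (starRingEnd ℂ) (v k) = 0)
    (hv : v ≠ 0)
    (r : ℝ) (hr : r = Real.sqrt (∑ k, ‖v k‖ ^ 2))
    (ut vt : Fin (n + 1) → ℂ)
    (hut : ∀ k, ut k = (1 / (Real.sqrt 2 : ℂ)) * ((r : ℂ) * u k + Complex.I * v k))
    (hvt : ∀ k, vt k = (1 / (Real.sqrt 2 : ℂ)) *
      ((starRingEnd ℂ) (v k) - Complex.I * (r : ℂ) * (starRingEnd ℂ) (u k))) :
    (∑ k, ‖ut k‖ ^ 2 = r ^ 2) ∧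
    (∑ k, ‖vt k‖ ^ 2 = r ^ 2) ∧
    r ^ 2 ≠ 0 ∧
    (∑ k, ut k * vt k = 0) := by
  set U : EuclideanSpace ℂ (Fin (n + 1)) := WithLp.toLp 2 u
  set V : EuclideanSpace ℂ (Fin (n + 1)) := WithLp.toLp 2 v
  set X := ((√2 : ℝ) : ℂ)⁻¹ • ((r : ℂ) • U + I • V)
  set Y := ((√2 : ℝ) : ℂ)⁻¹ • (V + (I * r) • U)
  have hUV : ⟪U, V⟫_ℂ = 0 := inner_eq_zero_symm.mp huv
  have hU : ‖U‖ ^ 2 = 1 := (EuclideanSpace.norm_sq_eq U).trans hu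
  have hV : ‖V‖ = r := by rw [hr, EuclideanSpace.norm_eq]
  have hX : ∀ k, ut k = X k := fun k => by rw [hut k]; simp [X, U, V]; ring
  have hY : ∀ k, vt k = conj (Y k) := fun k => by rw [hvt k]; simp [Y, U, V]; ring
  refine ⟨?_, ?_, ?_, ?_⟩
  · rw [sum_congr rfl fun k _ => by rw [hX k], ← EuclideanSpace.norm_sq_eq,
      norm_inv_sqrt_two_smul_sq, norm_ofReal_smul_add_I_smul_sq r hUV, hU, hV]
    ring
  · rw [sum_congr rfl fun k _ => by rw [hY k, norm_conj], ← EuclideanSpace.norm_sq_eq,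
      norm_inv_sqrt_two_smul_sq, norm_add_I_mul_ofReal_smul_sq r hUV, hU, hV]
    ring
  · have hV0 : V ≠ 0 := fun h => hv (congrArg WithLp.ofLp h)
    exact hV ▸ pow_ne_zero 2 (norm_ne_zero_iff.mpr hV0)
  · have hsum_eq_inner : ∑ k, ut k * vt k = ⟪Y, X⟫_ℂ := by
      simp only [hX, hY]; rfl
    rw [hsum_eq_inner, inner_smul_left, inner_smul_right,
      inner_add_I_mul_ofReal_smul_ofReal_smul_add_I_smul r hUV, hU, hV]
    simp

/-- The map `t_C` on `X_C` lands in `X̃_C`: if `‖u‖ = 1`,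
`∑ u_k conj(v_k) = 0` and `v ≠ 0`, then with `r = ‖v‖`,
`ũ_k = (1/√2)(r u_k + i v_k)` and `ṽ_k = (1/√2)(conj(v_k) - i r conj(u_k))`
satisfy `∑ |ũ_k|² = ∑ |ṽ_k|² = r² ≠ 0` and `∑ ũ_k ṽ_k = 0`. -/
theorem stmt_0 (n : ℕ) (hn : 1 ≤ n) (u v : Fin (n + 1) → ℂ)
    (hu : ∑ k, ‖u k‖ ^ 2 = 1)
    (huv : ∑ k, u k * (starRingEnd ℂ) (v k) = 0)
    (hv : v ≠ 0)
    (r : ℝ) (hr : r = Real.sqrt (∑ k, ‖v k‖ ^ 2))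
    (ut vt : Fin (n + 1) → ℂ)
    (hut : ∀ k, ut k = (1 / (Real.sqrt 2 : ℂ)) * ((r : ℂ) * u k + Complex.I * v k))
    (hvt : ∀ k, vt k = (1 / (Real.sqrt 2 : ℂ)) *
      ((starRingEnd ℂ) (v k) - Complex.I * (r : ℂ) * (starRingEnd ℂ) (u k))) :
    (∑ k, ‖ut k‖ ^ 2 = r ^ 2) ∧
    (∑ k, ‖vt k‖ ^ 2 = r ^ 2) ∧
    r ^ 2 ≠ 0 ∧
    (∑ k, ut k * vt k = 0) :=
  stmt_0_general n u v hu huv hv r hr ut vt hut hvt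
end

section
/- Let n ≥ 1. The map t sending (u,v) to (ũ,ṽ), where ũ_k = (1/√2)(‖v‖·u_k + i·v_k) and ṽ_k = (1/√2)(conj(v_k) − i·‖v‖·conj(u_k)), is a bijection from the set X_C = {(u,v) ∈ ℂ^{n+1}×ℂ^{n+1} : ‖u‖ = 1, ∑_k u_k·conj(v_k) = 0, v ≠ 0} onto the set X̃_C = {(ũ,ṽ) ∈ ℂ^{n+1}×ℂ^{n+1} : ‖ũ‖ = ‖ṽ‖ ≠ 0, ∑_k ũ_k·ṽ_k = 0}. -/
open Complex Finset

/-- The Hermitian norm `‖x‖ = √(∑ |x_k|²)` on `ℂ^{n+1}`. -/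
noncomputable def hermNorm {n : ℕ} (x : Fin (n + 1) → ℂ) : ℝ :=
  Real.sqrt (∑ k, ‖x k‖ ^ 2)

/-- The map `t : (u,v) ↦ (ũ,ṽ)` with `ũ_k = (1/√2)(‖v‖ u_k + i v_k)` and
`ṽ_k = (1/√2)(conj(v_k) - i ‖v‖ conj(u_k))`. -/
noncomputable def tC {n : ℕ} (p : (Fin (n + 1) → ℂ) × (Fin (n + 1) → ℂ)) :
    (Fin (n + 1) → ℂ) × (Fin (n + 1) → ℂ) :=
  (fun k => (1 / (Real.sqrt 2 : ℂ)) * ((hermNorm p.2 : ℂ) * p.1 k + Complex.I * p.2 k),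
   fun k => (1 / (Real.sqrt 2 : ℂ)) *
     ((starRingEnd ℂ) (p.2 k) - Complex.I * (hermNorm p.2 : ℂ) * (starRingEnd ℂ) (p.1 k)))

/-- `X_C = {(u,v) : ‖u‖ = 1, ∑ u_k conj(v_k) = 0, v ≠ 0}`. -/
def XC (n : ℕ) : Set ((Fin (n + 1) → ℂ) × (Fin (n + 1) → ℂ)) :=
  {p | hermNorm p.1 = 1 ∧ (∑ k, p.1 k * (starRingEnd ℂ) (p.2 k)) = 0 ∧ p.2 ≠ 0}

/-- `X̃_C = {(ũ,ṽ) : ‖ũ‖ = ‖ṽ‖ ≠ 0, ∑ ũ_k ṽ_k = 0}`. -/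
def XtC (n : ℕ) : Set ((Fin (n + 1) → ℂ) × (Fin (n + 1) → ℂ)) :=
  {p | hermNorm p.1 = hermNorm p.2 ∧ hermNorm p.1 ≠ 0 ∧ (∑ k, p.1 k * p.2 k) = 0}

/-! Rescaling `u` to length `‖v‖` identifies `X_C` with the pairs `(a, v)` of orthogonal vectors
of equal nonzero length. The unitary map `(a, v) ↦ ((a + i v)/√2, (i a + v)/√2)` preserves this set
and is inverted by the same formula with `-i`. Conjugating the second vector then turns the
Hermitian orthogonality `⟪conj ṽ, ũ⟫ = 0` into the bilinear condition `∑ ũ_k ṽ_k = 0` of `X̃_C`,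
and `t` is the composite of these three bijections. -/

open scoped InnerProductSpace ComplexConjugate

section InnerProductSpace

variable {E : Type*} [NormedAddCommGroup E] [InnerProductSpace ℂ E]

noncomputable def pairRotation (ζ : ℂ) (p : E × E) : E × E :=
  ((√2 : ℂ)⁻¹ • (p.1 + ζ • p.2), (√2 : ℂ)⁻¹ • (ζ • p.1 + p.2))

lemma inv_sqrt_two_sq : ((√2 : ℂ)⁻¹) ^ 2 = 2⁻¹ := by
  rw [inv_pow, ← ofReal_pow, Real.sq_sqrt zero_le_two]; norm_num

theorem pairRotation_neg_pairRotation {ζ : ℂ} (hζ : ζ ^ 2 = -1) (p : E × E) :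
    pairRotation (-ζ) (pairRotation ζ p) = p := by
  ext <;> simp only [pairRotation]
  · linear_combination (norm := module) ((1 - ζ ^ 2) * inv_sqrt_two_sq - (2⁻¹ : ℂ) * hζ) • p.1
  · linear_combination (norm := module) ((1 - ζ ^ 2) * inv_sqrt_two_sq - (2⁻¹ : ℂ) * hζ) • p.2

theorem norm_eq_of_inner_self_eq {x y : E} (h : ⟪x, x⟫_ℂ = ⟪y, y⟫_ℂ) : ‖x‖ = ‖y‖ := by
  rw [inner_self_eq_norm_sq_to_K, inner_self_eq_norm_sq_to_K] at h
  exact (sq_eq_sq₀ (norm_nonneg _) (norm_nonneg _)).1 (by exact_mod_cast h)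

theorem inner_pairRotation {ζ : ℂ} (hζ : conj ζ = -ζ) (hζ2 : ζ ^ 2 = -1) {a v : E}
    (hav : ⟪a, a⟫_ℂ = ⟪v, v⟫_ℂ) (h : ⟪a, v⟫_ℂ = 0) :
    ⟪(pairRotation ζ (a, v)).1, (pairRotation ζ (a, v)).1⟫_ℂ = ⟪a, a⟫_ℂ ∧
    ⟪(pairRotation ζ (a, v)).2, (pairRotation ζ (a, v)).2⟫_ℂ = ⟪a, a⟫_ℂ ∧
    ⟪(pairRotation ζ (a, v)).2, (pairRotation ζ (a, v)).1⟫_ℂ = 0 := by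
  have h' : ⟪v, a⟫_ℂ = 0 := inner_eq_zero_symm.1 h
  simp only [pairRotation, inner_smul_left, inner_smul_right, inner_add_left, inner_add_right,
    h, h', hav, hζ, map_inv₀, conj_ofReal]
  refine ⟨?_, ?_, ?_⟩
  · linear_combination (1 - ζ ^ 2) * ⟪v, v⟫_ℂ * inv_sqrt_two_sq - 2⁻¹ * ⟪v, v⟫_ℂ * hζ2
  · linear_combination (1 - ζ ^ 2) * ⟪v, v⟫_ℂ * inv_sqrt_two_sq - 2⁻¹ * ⟪v, v⟫_ℂ * hζ2
  · ring

variable (E) in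
def orthoPairs : Set (E × E) := {p | ‖p.1‖ = ‖p.2‖ ∧ p.1 ≠ 0 ∧ ⟪p.2, p.1⟫_ℂ = 0}

theorem mapsTo_pairRotation {ζ : ℂ} (hζ : conj ζ = -ζ) (hζ2 : ζ ^ 2 = -1) :
    Set.MapsTo (pairRotation ζ) (orthoPairs E) (orthoPairs E) := by
  rintro ⟨a, v⟩ ⟨hav, ha, hva⟩
  have hav' : ⟪a, a⟫_ℂ = ⟪v, v⟫_ℂ := by simp only [inner_self_eq_norm_sq_to_K, hav]
  obtain ⟨hx, hy, hyx⟩ := inner_pairRotation hζ hζ2 hav' (inner_eq_zero_symm.1 hva)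
  have hxa := norm_eq_of_inner_self_eq hx
  refine ⟨hxa.trans (norm_eq_of_inner_self_eq hy).symm, ?_, hyx⟩
  rwa [← norm_ne_zero_iff, hxa, norm_ne_zero_iff]

theorem bijOn_pairRotation_I : Set.BijOn (pairRotation I) (orthoPairs E) (orthoPairs E) := by
  refine Set.InvOn.bijOn (f' := pairRotation (-I)) ⟨fun p _ => ?_, fun p _ => ?_⟩
    (mapsTo_pairRotation conj_I I_sq) (mapsTo_pairRotation (by simp) (by simp))
  · exact pairRotation_neg_pairRotation I_sq p
  · simpa using pairRotation_neg_pairRotation (ζ := -I) (by simp) p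

variable (E) in
def unitOrthoPairs : Set (E × E) := {p | ‖p.1‖ = 1 ∧ ⟪p.2, p.1⟫_ℂ = 0 ∧ p.2 ≠ 0}

def rescaleFst (p : E × E) : E × E := ((‖p.2‖ : ℂ) • p.1, p.2)

noncomputable def normalizeFst (p : E × E) : E × E := ((‖p.1‖ : ℂ)⁻¹ • p.1, p.2)

theorem bijOn_rescaleFst : Set.BijOn rescaleFst (unitOrthoPairs E) (orthoPairs E) := by
  refine Set.InvOn.bijOn (f' := normalizeFst) ⟨?_, ?_⟩ ?_ ?_
  · rintro ⟨u, v⟩ ⟨hu, -, hv⟩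
    have hr : ‖(‖v‖ : ℂ) • u‖ = ‖v‖ := by simp [norm_smul, hu]
    simp only [rescaleFst, normalizeFst, hr, smul_smul]
    rw [inv_mul_cancel₀ (by simpa using hv), one_smul]
  · rintro ⟨a, v⟩ ⟨hav, ha, -⟩
    simp [rescaleFst, normalizeFst, smul_smul, ← hav, ha]
  · rintro ⟨u, v⟩ ⟨hu, hvu, hv⟩
    refine ⟨by simp [rescaleFst, norm_smul, hu], ?_, by simp [rescaleFst, hvu]⟩
    exact smul_ne_zero (by simpa using hv) (norm_ne_zero_iff.1 (by simp [hu]))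
  · rintro ⟨a, v⟩ ⟨hav, ha, hva⟩
    refine ⟨norm_smul_inv_norm ha, by simp [normalizeFst, hva], ?_⟩
    simpa [normalizeFst, ← norm_eq_zero, ← hav] using ha

end InnerProductSpace

section Coordinates

variable {n : ℕ}

theorem hermNorm_eq_norm (x : Fin (n + 1) → ℂ) :
    hermNorm x = ‖(WithLp.toLp 2 x : EuclideanSpace ℂ (Fin (n + 1)))‖ := by
  simp [hermNorm, EuclideanSpace.norm_eq]

theorem sum_mul_conj_eq_inner (x y : Fin (n + 1) → ℂ) :
    ∑ k, x k * conj (y k) =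
      ⟪(WithLp.toLp 2 y : EuclideanSpace ℂ (Fin (n + 1))), WithLp.toLp 2 x⟫_ℂ := by
  simp [PiLp.inner_apply]

theorem hermNorm_eq_zero {x : Fin (n + 1) → ℂ} : hermNorm x = 0 ↔ x = 0 := by
  simp [hermNorm_eq_norm]

theorem hermNorm_star (x : Fin (n + 1) → ℂ) : hermNorm (star x) = hermNorm x := by
  simp [hermNorm]

variable (n) in
noncomputable def toEuclideanPair :
    (Fin (n + 1) → ℂ) × (Fin (n + 1) → ℂ) ≃
      EuclideanSpace ℂ (Fin (n + 1)) × EuclideanSpace ℂ (Fin (n + 1)) :=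
  (WithLp.equiv 2 _).symm.prodCongr (WithLp.equiv 2 _).symm

variable (n) in
noncomputable def toEuclideanPairConjSnd :
    (Fin (n + 1) → ℂ) × (Fin (n + 1) → ℂ) ≃
      EuclideanSpace ℂ (Fin (n + 1)) × EuclideanSpace ℂ (Fin (n + 1)) :=
  (WithLp.equiv 2 _).symm.prodCongr
    ((Function.Involutive.toPerm star star_involutive).trans (WithLp.equiv 2 _).symm)

theorem XC_eq_preimage : XC n = toEuclideanPair n ⁻¹' unitOrthoPairs _ := by
  ext ⟨u, v⟩
  simp [XC, unitOrthoPairs, toEuclideanPair, hermNorm_eq_norm, sum_mul_conj_eq_inner]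

theorem XtC_eq_preimage : XtC n = toEuclideanPairConjSnd n ⁻¹' orthoPairs _ := by
  ext ⟨x, y⟩
  simp [XtC, orthoPairs, toEuclideanPairConjSnd, ← sum_mul_conj_eq_inner, ← hermNorm_eq_norm,
    hermNorm_star, hermNorm_eq_zero]

theorem tC_eq_comp : tC =
    (toEuclideanPairConjSnd n).symm ∘ pairRotation I ∘ rescaleFst ∘ toEuclideanPair n := by
  funext ⟨u, v⟩
  ext k <;> simp [tC, toEuclideanPairConjSnd, toEuclideanPair, pairRotation, rescaleFst,
    hermNorm_eq_norm] <;> ring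

end Coordinates

theorem stmt_1_general (n : ℕ) : Set.BijOn tC (XC n) (XtC n) := by
  rw [XC_eq_preimage, XtC_eq_preimage, tC_eq_comp]
  exact ((toEuclideanPairConjSnd n).symm.bijOn fun _ => by simp).comp
    (bijOn_pairRotation_I.comp (bijOn_rescaleFst.comp ((toEuclideanPair n).bijOn fun _ => Iff.rfl)))

/-- `t` is a bijection from `X_C` onto `X̃_C`. -/
theorem stmt_1 (n : ℕ) (hn : 1 ≤ n) : Set.BijOn tC (XC n) (XtC n) :=
  stmt_1_general n
end

section
/- Let n ≥ 0 and let a, b ∈ ℂ^{n+1} with a·b = ∑_i a_i b_i = 0. Then the functions f, g : ℂ^{n+1} × ℂ^{n+1} → ℂ defined by f(z,w) = (a·z)(b·conj(z)) + (a·w)(b·conj(w)) and g(z,w) = (a·z)(b·w) − (a·w)(b·z) are harmonic functions on ℝ^{4n+4} ≅ ℂ^{n+1} × ℂ^{n+1}, i.e. their Euclidean Laplacians vanish. -/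
/-!
Both `f` and `g` are real quadratic forms `p ↦ B p p` with `B` real bilinear, and the Laplacian
of such a form is `2 ∑ B e e` over a real orthonormal basis. Every term of the `B` of `g` pairs
a `z`-coordinate with a `w`-coordinate, so it vanishes on each basis vector. For `f`, each of
the directions `(e_i, 0)`, `(i·e_i, 0)`, `(0, e_i)`, `(0, i·e_i)` contributes `a_i b_i`
(for `i·e_i` because `i · conj i = 1`), so `Δf = 8 a·b`.
-/

open Complex Finset

/-- The Euclidean Laplacian on `ℂ^{n+1} × ℂ^{n+1} ≅ ℝ^{4n+4}`: the sum of the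
second directional derivatives (over `ℝ`) along the real orthonormal basis
directions `(e_i, 0)`, `(i·e_i, 0)`, `(0, e_i)`, `(0, i·e_i)`. -/
noncomputable def euclLaplacian2 {n : ℕ}
    (f : (Fin (n + 1) → ℂ) × (Fin (n + 1) → ℂ) → ℂ)
    (x : (Fin (n + 1) → ℂ) × (Fin (n + 1) → ℂ)) : ℂ :=
  ∑ i : Fin (n + 1),
    (fderiv ℝ (fun y => fderiv ℝ f y (Pi.single i 1, 0)) x (Pi.single i 1, 0) +
     fderiv ℝ (fun y => fderiv ℝ f y (Pi.single i Complex.I, 0)) x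
       (Pi.single i Complex.I, 0) +
     fderiv ℝ (fun y => fderiv ℝ f y (0, Pi.single i 1)) x (0, Pi.single i 1) +
     fderiv ℝ (fun y => fderiv ℝ f y (0, Pi.single i Complex.I)) x
       (0, Pi.single i Complex.I))

section QuadraticForm

variable {𝕜 E F : Type*} [NontriviallyNormedField 𝕜] [NormedAddCommGroup E] [NormedSpace 𝕜 E]
  [NormedAddCommGroup F] [NormedSpace 𝕜 F]

theorem fderiv_bilinear_diag_apply (B : E →L[𝕜] E →L[𝕜] F) (y d : E) :
    fderiv 𝕜 (fun z => B z z) y d = B y d + B d y := by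
  have h : HasFDerivAt (fun z => B z z) _ y :=
    B.hasFDerivAt_of_bilinear (hasFDerivAt_id y) (hasFDerivAt_id y)
  simp [h.fderiv]

theorem fderiv_fderiv_bilinear_diag_apply (B : E →L[𝕜] E →L[𝕜] F) (x d : E) :
    fderiv 𝕜 (fun y => fderiv 𝕜 (fun z => B z z) y d) x d = B d d + B d d := by
  have h : (fun y => fderiv 𝕜 (fun z => B z z) y d) = ⇑(B.flip d + B d) := by
    ext y
    simp [fderiv_bilinear_diag_apply]
  rw [h, ContinuousLinearMap.fderiv]
  simp

end QuadraticForm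

theorem euclLaplacian2_bilinear_diag {n : ℕ}
    (B : ((Fin (n + 1) → ℂ) × (Fin (n + 1) → ℂ)) →L[ℝ]
      ((Fin (n + 1) → ℂ) × (Fin (n + 1) → ℂ)) →L[ℝ] ℂ)
    (x : (Fin (n + 1) → ℂ) × (Fin (n + 1) → ℂ)) :
    euclLaplacian2 (fun p => B p p) x = 2 * ∑ i,
      (B (Pi.single i 1, 0) (Pi.single i 1, 0) + B (Pi.single i I, 0) (Pi.single i I, 0) +
        B (0, Pi.single i 1) (0, Pi.single i 1) + B (0, Pi.single i I) (0, Pi.single i I)) := by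
  simp only [euclLaplacian2, fderiv_fderiv_bilinear_diag_apply, mul_sum]
  congr 1 with i
  ring

section DotProduct

variable {ι : Type*} [Fintype ι]

noncomputable def dotCLM (a : ι → ℂ) : (ι → ℂ) →L[ℝ] ℂ :=
  ∑ i, a i • ContinuousLinearMap.proj i

noncomputable def conjDotCLM (a : ι → ℂ) : (ι → ℂ) →L[ℝ] ℂ :=
  ∑ i, a i • conjCLE.toContinuousLinearMap.comp (ContinuousLinearMap.proj i)

theorem dotCLM_apply (a z : ι → ℂ) : dotCLM a z = ∑ i, a i * z i := by
  simp [dotCLM]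

theorem conjDotCLM_apply (a z : ι → ℂ) :
    conjDotCLM a z = ∑ i, a i * starRingEnd ℂ (z i) := by
  simp [conjDotCLM]

variable [DecidableEq ι]

@[simp]
theorem dotCLM_single (a : ι → ℂ) (i : ι) (c : ℂ) : dotCLM a (Pi.single i c) = a i * c := by
  simp [dotCLM_apply, Pi.single_apply]

@[simp]
theorem conjDotCLM_single (a : ι → ℂ) (i : ι) (c : ℂ) :
    conjDotCLM a (Pi.single i c) = a i * starRingEnd ℂ c := by
  simp [conjDotCLM_apply, Pi.single_apply, apply_ite (starRingEnd ℂ)]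

end DotProduct

section Harmonic

open ContinuousLinearMap

variable {n : ℕ} (a b : Fin (n + 1) → ℂ) (x : (Fin (n + 1) → ℂ) × (Fin (n + 1) → ℂ))

theorem euclLaplacian2_dot_mul_conjDot :
    euclLaplacian2 (fun p => dotCLM a p.1 * conjDotCLM b p.1 + dotCLM a p.2 * conjDotCLM b p.2) x
      = 8 * ∑ i, a i * b i := by
  let V := Fin (n + 1) → ℂ
  let B := (mul ℝ ℂ).bilinearComp (dotCLM a ∘L fst ℝ V V) (conjDotCLM b ∘L fst ℝ V V) +
    (mul ℝ ℂ).bilinearComp (dotCLM a ∘L snd ℝ V V) (conjDotCLM b ∘L snd ℝ V V)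
  change euclLaplacian2 (fun p => B p p) x = _
  rw [euclLaplacian2_bilinear_diag, mul_sum, mul_sum]
  congr 1 with i
  simp [B]
  linear_combination (-4 * a i * b i) * I_sq

theorem euclLaplacian2_dot_mul_dot_sub :
    euclLaplacian2 (fun p => dotCLM a p.1 * dotCLM b p.2 - dotCLM a p.2 * dotCLM b p.1) x = 0 := by
  let V := Fin (n + 1) → ℂ
  let B := (mul ℝ ℂ).bilinearComp (dotCLM a ∘L fst ℝ V V) (dotCLM b ∘L snd ℝ V V) -
    (mul ℝ ℂ).bilinearComp (dotCLM a ∘L snd ℝ V V) (dotCLM b ∘L fst ℝ V V)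
  change euclLaplacian2 (fun p => B p p) x = _
  rw [euclLaplacian2_bilinear_diag]
  simp [B]

end Harmonic

/-- for `a·b = 0`, the functions
`f(z,w) = (a·z)(b·conj z) + (a·w)(b·conj w)` and
`g(z,w) = (a·z)(b·w) - (a·w)(b·z)` are harmonic on `ℝ^{4n+4}`. -/
theorem stmt_11 (n : ℕ) (a b : Fin (n + 1) → ℂ) (hab : (∑ i, a i * b i) = 0)
    (f g : (Fin (n + 1) → ℂ) × (Fin (n + 1) → ℂ) → ℂ)
    (hf : ∀ p, f p = (∑ i, a i * p.1 i) * (∑ i, b i * (starRingEnd ℂ) (p.1 i)) +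
      (∑ i, a i * p.2 i) * (∑ i, b i * (starRingEnd ℂ) (p.2 i)))
    (hg : ∀ p, g p = (∑ i, a i * p.1 i) * (∑ i, b i * p.2 i) -
      (∑ i, a i * p.2 i) * (∑ i, b i * p.1 i)) :
    (∀ p, euclLaplacian2 f p = 0) ∧ (∀ p, euclLaplacian2 g p = 0) := by
  have hf' : f = fun p => dotCLM a p.1 * conjDotCLM b p.1 + dotCLM a p.2 * conjDotCLM b p.2 := by
    ext p
    simp only [hf, dotCLM_apply, conjDotCLM_apply]
  have hg' : g = fun p => dotCLM a p.1 * dotCLM b p.2 - dotCLM a p.2 * dotCLM b p.1 := by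
    ext p
    simp only [hg, dotCLM_apply]
  subst hf' hg'
  exact ⟨fun p => by rw [euclLaplacian2_dot_mul_conjDot, hab, mul_zero],
    euclLaplacian2_dot_mul_dot_sub a b⟩
end

section
/- Let n be a positive integer such that every prime factor of n is congruent to 2 modulo 3. Then the only pair of positive integers (x, y) with x ≥ 1 and y ≥ 1 satisfying x² − xy + y² = n² is (x, y) = (n, n). -/
/-!
For a prime `p ≡ 2 (mod 3)`, cubing is a bijection of `𝔽_p`, since `3 ∣ 2p - 1`. As
`(x + y)(x² - xy + y²) = x³ + y³`, the congruence `x² - xy + y² ≡ 0 (mod p)` forces `x ≡ -y`,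
hence `3y² ≡ 0`, so `p` divides both `x` and `y`. Dividing out the prime factors of `n` one at
a time gives `n ∣ x` and `n ∣ y`, so `x, y ≥ n`; but `x² - xy + y² = (x - y)² + xy ≥ n²`,
with equality only at `x = y = n`.
-/

theorem FiniteField.pow_three_injective {K : Type*} [Field K] [Fintype K]
    (hK : Fintype.card K % 3 = 2) : Function.Injective fun a : K => a ^ 3 := by
  set q := Fintype.card K
  have hq : 0 < q := Fintype.card_pos
  have cube_inv : ∀ a : K, (a ^ 3) ^ (2 * (q / 3) + 1) = a := fun a => by
    have he : 3 * (2 * (q / 3) + 1) = q - 1 + q := by omega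
    rw [← pow_mul, he, pow_add, FiniteField.pow_card, ← pow_succ, Nat.sub_add_cancel hq,
      FiniteField.pow_card]
  exact Function.LeftInverse.injective (g := fun b => b ^ (2 * (q / 3) + 1)) cube_inv

theorem ZMod.eq_zero_of_sq_sub_mul_add_sq_eq_zero {p : ℕ} [Fact p.Prime] (hp : p % 3 = 2)
    {a b : ZMod p} (h : a ^ 2 - a * b + b ^ 2 = 0) : a = 0 ∧ b = 0 := by
  have hcube : a ^ 3 = (-b) ^ 3 := by linear_combination (a + b) * h
  have hab : a = -b := FiniteField.pow_three_injective (by rwa [ZMod.card]) hcube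
  have h3 : (3 : ZMod p) ≠ 0 := by
    intro h3
    have hp3 : p ∣ 3 := (ZMod.natCast_eq_zero_iff 3 p).1 (by exact_mod_cast h3)
    have := (Nat.prime_dvd_prime_iff_eq Fact.out Nat.prime_three).1 hp3
    omega
  have hb : b = 0 := by
    have h3b : 3 * b ^ 2 = 0 := by rw [hab] at h; linear_combination h
    simpa [h3] using h3b
  exact ⟨by rw [hab, hb, neg_zero], hb⟩

theorem Int.dvd_of_prime_dvd_sq_sub_mul_add_sq {p : ℕ} (hp : p.Prime) (hp3 : p % 3 = 2)
    {x y : ℤ} (h : (p : ℤ) ∣ x ^ 2 - x * y + y ^ 2) : (p : ℤ) ∣ x ∧ (p : ℤ) ∣ y := by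
  have := Fact.mk hp
  simp only [← ZMod.intCast_zmod_eq_zero_iff_dvd] at h ⊢
  push_cast at h
  exact ZMod.eq_zero_of_sq_sub_mul_add_sq_eq_zero hp3 h

theorem Int.natCast_dvd_of_sq_sub_mul_add_sq_eq_sq (n : ℕ)
    (h : ∀ p : ℕ, p.Prime → p ∣ n → p % 3 = 2) {x y : ℤ}
    (hxy : x ^ 2 - x * y + y ^ 2 = (n : ℤ) ^ 2) : (n : ℤ) ∣ x ∧ (n : ℤ) ∣ y := by
  induction n using induction_on_primes generalizing x y with
  | zero =>
    push_cast at hxy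
    have hy : y = 0 := by nlinarith [sq_nonneg (2 * x - y), sq_nonneg y]
    subst hy
    simpa using hxy
  | one => simp
  | prime_mul p m hp ih =>
    have hp3 := h p hp (dvd_mul_right p m)
    have hpxy : (p : ℤ) ∣ x ^ 2 - x * y + y ^ 2 := ⟨p * m ^ 2, by rw [hxy]; push_cast; ring⟩
    obtain ⟨⟨a, rfl⟩, ⟨b, rfl⟩⟩ := Int.dvd_of_prime_dvd_sq_sub_mul_add_sq hp hp3 hpxy
    have hab : a ^ 2 - a * b + b ^ 2 = (m : ℤ) ^ 2 := by
      have hp0 : (p : ℤ) ^ 2 ≠ 0 := by exact_mod_cast pow_ne_zero 2 hp.ne_zero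
      apply mul_left_cancel₀ hp0
      push_cast at hxy
      linear_combination hxy
    obtain ⟨ha, hb⟩ := ih (fun q hq hqm => h q hq (hqm.mul_left p)) hab
    push_cast
    exact ⟨mul_dvd_mul_left _ ha, mul_dvd_mul_left _ hb⟩

theorem Int.eq_of_natCast_dvd_of_sq_sub_mul_add_sq_eq_sq {n : ℕ} {x y : ℤ} (hx : 0 < x)
    (hy : 0 < y) (hnx : (n : ℤ) ∣ x) (hny : (n : ℤ) ∣ y)
    (hxy : x ^ 2 - x * y + y ^ 2 = (n : ℤ) ^ 2) : x = n ∧ y = n := by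
  have hn : (0 : ℤ) ≤ n := n.cast_nonneg
  have hxn := Int.le_of_dvd hx hnx
  have hyn := Int.le_of_dvd hy hny
  have hprod : (n : ℤ) * n ≤ x * y := mul_le_mul hxn hyn hn hx.le
  have hxy_eq : x = y := by nlinarith [sq_nonneg (x - y)]
  subst hxy_eq
  have hx_eq : x = n := by nlinarith
  exact ⟨hx_eq, hx_eq⟩

theorem stmt_15_general (n : ℕ)
    (h : ∀ p : ℕ, p.Prime → p ∣ n → p % 3 = 2)
    (x y : ℤ) (hx : 1 ≤ x) (hy : 1 ≤ y)
    (hxy : x ^ 2 - x * y + y ^ 2 = (n : ℤ) ^ 2) :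
    x = n ∧ y = n := by
  obtain ⟨hnx, hny⟩ := Int.natCast_dvd_of_sq_sub_mul_add_sq_eq_sq n h hxy
  exact Int.eq_of_natCast_dvd_of_sq_sub_mul_add_sq_eq_sq hx hy hnx hny hxy

/-- if every prime factor of the positive integer `n` is
congruent to `2` modulo `3`, then the only pair of positive integers `(x, y)`
with `x² - xy + y² = n²` is `(x, y) = (n, n)`. -/
theorem stmt_15 (n : ℕ) (hn : 0 < n)
    (h : ∀ p : ℕ, p.Prime → p ∣ n → p % 3 = 2)
    (x y : ℤ) (hx : 1 ≤ x) (hy : 1 ≤ y)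
    (hxy : x ^ 2 - x * y + y ^ 2 = (n : ℤ) ^ 2) :
    x = n ∧ y = n :=
  stmt_15_general n h x y hx hy hxy
end
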